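/- Let n ≥ 4 be an integer. Then for every integer ℓ ≥ 1 the following identity holds in F: Σ_{a ∈ I_n} q^{2n−2}·(1 − (q² − 1)/(q²·L_a² − 1))·((q^{2−2n}·L_a − 1)/(q − q^{−1}))^ℓ·∏_{b ∈ I_n, b ≠ a} (q·L_a − q^{−1}·L_b)/(q·L_a − q·L_b) = Σ_{a ∈ I_n} ((q^{2−2n}·L_a − 1)/(q − q^{−1}))^ℓ·P_{n,a}. (This is the type D_n case of the paper's Lemma rewriting the Harish–Chandra image of the order-ℓ quantum Casimir element.) -/

import Mathlib

/-!
`K = ℚ(q)` is modelled as `RatFunc ℚ` with `q = RatFunc.X`, and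
`F = K(L_1, …, L_n)` is modelled inside the fraction field of the polynomial ring
`K[L_0, L_1, L_2, …]` (only the independent indeterminates `L_1, …, L_n` are used).
For `a ∈ I_n = {-n, …, -1, 1, …, n}` we set `L_{-a} := L_a⁻¹`.
-/

noncomputable section

abbrev KK : Type := RatFunc ℚ
abbrev RR : Type := MvPolynomial ℕ KK
abbrev FF : Type := FractionRing RR

/-- the indeterminate `q`, viewed in `F` -/
def qF : FF := algebraMap RR FF (MvPolynomial.C RatFunc.X)

/-- `L_a` for `a ∈ ℤ`: `L_a` an indeterminate for `a > 0`, and `L_a = L_{-a}⁻¹` for `a < 0`. -/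
def LF (a : ℤ) : FF :=
  if a = 0 then 1
  else if 0 < a then algebraMap RR FF (MvPolynomial.X a.toNat)
  else (algebraMap RR FF (MvPolynomial.X (-a).toNat))⁻¹

/-- the index set `I_n = {-n, …, -1, 1, …, n}` -/
def In (n : ℕ) : Finset ℤ := (Finset.Icc (-(n : ℤ)) (n : ℤ)).erase 0

/-- `P_{n,a} = ∏_{b ∈ I_n, b ≠ ±a} (q L_a - q⁻¹ L_b)/(L_a - L_b)` -/
def Pna (n : ℕ) (a : ℤ) : FF :=
  ∏ b ∈ ((In n).erase a).erase (-a), (qF * LF a - qF⁻¹ * LF b) / (LF a - LF b)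

-- auxiliary
def Mi (i : ℕ) : FF := algebraMap RR FF (MvPolynomial.X i)

lemma phi_inj : Function.Injective (algebraMap RR FF) := IsFractionRing.injective RR FF

lemma Mi_ne (i : ℕ) : Mi i ≠ 0 := by
  rw [Mi]
  intro h
  rw [← map_zero (algebraMap RR FF)] at h
  have hx : (MvPolynomial.X i : RR) = 0 := phi_inj h
  exact MvPolynomial.X_ne_zero i hx

lemma qF_ne : qF ≠ 0 := by
  rw [qF]
  intro h
  rw [← map_zero (algebraMap RR FF)] at h
  have h2 : (MvPolynomial.C RatFunc.X : RR) = 0 := phi_inj h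
  rw [map_eq_zero_iff _ (MvPolynomial.C_injective ℕ KK)] at h2
  exact RatFunc.X_ne_zero h2

lemma ratX2 : (RatFunc.X : KK) ^ 2 ≠ 1 := by
  intro h
  have h2 : (Polynomial.X : Polynomial ℚ) ^ 2 = 1 := by
    apply IsFractionRing.injective (Polynomial ℚ) KK
    rw [map_pow, map_one, RatFunc.algebraMap_X]
    exact h
  have h3 := congrArg (Polynomial.eval 2) h2
  simp at h3
  norm_num at h3

lemma aux1 (i : ℕ) : (MvPolynomial.X i : RR) ^ 2 ≠ 1 := by
  intro h
  have h2 := congrArg (MvPolynomial.eval (fun _ => (RatFunc.X : KK))) h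
  simp only [MvPolynomial.eval_pow, MvPolynomial.eval_X, map_one] at h2
  exact ratX2 h2

lemma aux2 (i : ℕ) : (MvPolynomial.C (RatFunc.X ^ 2) * MvPolynomial.X i ^ 2 : RR) ≠ 1 := by
  intro h
  have h2 := congrArg (MvPolynomial.eval (fun _ => (1 : KK))) h
  simp only [MvPolynomial.eval_mul, MvPolynomial.eval_C, MvPolynomial.eval_pow,
    MvPolynomial.eval_X, map_one, one_pow, mul_one] at h2
  exact ratX2 h2

lemma aux3 (i : ℕ) : (MvPolynomial.C (RatFunc.X ^ 2) : RR) ≠ MvPolynomial.X i ^ 2 := by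
  intro h
  have h2 := congrArg (MvPolynomial.eval (fun _ => (0 : KK))) h
  simp only [MvPolynomial.eval_C, MvPolynomial.eval_pow, MvPolynomial.eval_X] at h2
  have h3 : (RatFunc.X : KK) ^ 2 = 0 := by rw [h2]; ring
  have h4 : (RatFunc.X : KK) = 0 := (pow_eq_zero_iff two_ne_zero).mp h3
  exact RatFunc.X_ne_zero h4

lemma hM2 (i : ℕ) : (Mi i) ^ 2 ≠ 1 := by
  intro h
  apply aux1 i
  apply phi_inj
  rw [map_pow, map_one]
  exact h

lemma hqM2 (i : ℕ) : qF ^ 2 * (Mi i) ^ 2 ≠ 1 := by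
  intro h
  apply aux2 i
  apply phi_inj
  simp only [map_mul, map_pow, map_one]
  rw [qF, Mi] at h
  exact h

lemma hq2M2 (i : ℕ) : qF ^ 2 ≠ (Mi i) ^ 2 := by
  intro h
  apply aux3 i
  apply phi_inj
  simp only [map_pow]
  rw [qF, Mi] at h
  exact h

lemma hsub_pos (i : ℕ) : Mi i - (Mi i)⁻¹ ≠ 0 := by
  intro h
  apply hM2 i
  have h' : Mi i = (Mi i)⁻¹ := sub_eq_zero.mp h
  rw [sq]
  nth_rewrite 2 [h']
  exact mul_inv_cancel₀ (Mi_ne i)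

lemma hsub_neg (i : ℕ) : (Mi i)⁻¹ - ((Mi i)⁻¹)⁻¹ ≠ 0 := by
  rw [inv_inv]
  intro h
  exact hsub_pos i (by linear_combination -h)

lemma h1_pos (i : ℕ) : qF ^ 2 * (Mi i) ^ 2 - 1 ≠ 0 := sub_ne_zero.mpr (hqM2 i)

lemma h1_neg (i : ℕ) : qF ^ 2 * ((Mi i)⁻¹) ^ 2 - 1 ≠ 0 := by
  intro h
  apply hq2M2 i
  have h' : qF ^ 2 * ((Mi i)⁻¹) ^ 2 = 1 := sub_eq_zero.mp h
  field_simp at h'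
  rwa [div_eq_one_iff_eq (pow_ne_zero 2 (Mi_ne i))] at h'

lemma key (q L : FF) (hq : q ≠ 0) (hL : L ≠ 0) (h1 : q ^ 2 * L ^ 2 - 1 ≠ 0)
    (h2 : L - L⁻¹ ≠ 0) :
    (1 - (q ^ 2 - 1) / (q ^ 2 * L ^ 2 - 1)) * ((q * L - q⁻¹ * L⁻¹) / (q * L - q * L⁻¹)) = 1 := by
  have h3 : q * L - q * L⁻¹ ≠ 0 := by
    rw [← mul_sub]; exact mul_ne_zero hq h2
  have hL2 : L ^ 2 - 1 ≠ 0 := by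
    intro h
    apply h2
    have : L - L⁻¹ = (L ^ 2 - 1) / L := by field_simp
    rw [this, h, zero_div]
  have hA : 1 - (q ^ 2 - 1) / (q ^ 2 * L ^ 2 - 1) =
      q ^ 2 * (L ^ 2 - 1) / (q ^ 2 * L ^ 2 - 1) := by
    field_simp
    ring
  have hf : (q * L - q⁻¹ * L⁻¹) / (q * L - q * L⁻¹) =
      (q ^ 2 * L ^ 2 - 1) / (q ^ 2 * (L ^ 2 - 1)) := by
    rw [div_eq_div_iff h3 (mul_ne_zero (pow_ne_zero 2 hq) hL2)]
    field_simp
  rw [hA, hf, div_mul_div_comm, mul_comm (q ^ 2 * (L ^ 2 - 1)),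
    div_self (mul_ne_zero h1 (mul_ne_zero (pow_ne_zero 2 hq) hL2))]

lemma LF_pos (a : ℤ) (h : 0 < a) : LF a = Mi a.toNat := by
  rw [LF, if_neg h.ne', if_pos h, Mi]

lemma LF_negc (a : ℤ) (h : a < 0) : LF a = (Mi (-a).toNat)⁻¹ := by
  rw [LF, if_neg h.ne, if_neg (not_lt.mpr h.le), Mi]

lemma LF_neg (a : ℤ) : LF (-a) = (LF a)⁻¹ := by
  rcases lt_trichotomy a 0 with h | h | h
  · rw [LF_negc a h, LF_pos (-a) (by omega), inv_inv]
  · subst h; simp [LF]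
  · rw [LF_pos a h, LF_negc (-a) (by omega), neg_neg]

lemma LF_ne (a : ℤ) (h : a ≠ 0) : LF a ≠ 0 := by
  rcases lt_or_gt_of_ne h with h' | h'
  · rw [LF_negc a h']; exact inv_ne_zero (Mi_ne _)
  · rw [LF_pos a h']; exact Mi_ne _

/-- Type `D_n` case of the Lemma rewriting the Harish–Chandra image of the order-`ℓ`
quantum Casimir element. -/
theorem typeD_casimir_HC_image_rewrite (n : ℕ) (hn : 4 ≤ n) (ℓ : ℕ) (hℓ : 1 ≤ ℓ) :
    ∑ a ∈ In n,
        qF ^ (2 * (n : ℤ) - 2) * (1 - (qF ^ 2 - 1) / (qF ^ 2 * (LF a) ^ 2 - 1)) *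
          ((qF ^ (2 - 2 * (n : ℤ)) * LF a - 1) / (qF - qF⁻¹)) ^ ℓ *
          ∏ b ∈ (In n).erase a, (qF * LF a - qF⁻¹ * LF b) / (qF * LF a - qF * LF b)
    = ∑ a ∈ In n,
        ((qF ^ (2 - 2 * (n : ℤ)) * LF a - 1) / (qF - qF⁻¹)) ^ ℓ * Pna n a := by
  refine Finset.sum_congr rfl fun a ha => ?_
  rw [In, Finset.mem_erase, Finset.mem_Icc] at ha
  obtain ⟨ha0, ha1, ha2⟩ := ha
  have hL := LF_ne a ha0
  have h1 : qF ^ 2 * (LF a) ^ 2 - 1 ≠ 0 := by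
    rcases lt_or_gt_of_ne ha0 with h | h
    · rw [LF_negc a h]; exact h1_neg _
    · rw [LF_pos a h]; exact h1_pos _
  have h2 : LF a - (LF a)⁻¹ ≠ 0 := by
    rcases lt_or_gt_of_ne ha0 with h | h
    · rw [LF_negc a h]; exact hsub_neg _
    · rw [LF_pos a h]; exact hsub_pos _
  have haIn : a ∈ In n := by
    rw [In, Finset.mem_erase, Finset.mem_Icc]; exact ⟨ha0, ha1, ha2⟩
  have hmem : -a ∈ (In n).erase a := by
    rw [Finset.mem_erase, In, Finset.mem_erase, Finset.mem_Icc]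
    exact ⟨by omega, by omega, by omega, by omega⟩
  rw [← Finset.mul_prod_erase _ _ hmem]
  have hcard : (((In n).erase a).erase (-a)).card = 2 * n - 2 := by
    rw [Finset.card_erase_of_mem hmem, Finset.card_erase_of_mem haIn, In,
      Finset.card_erase_of_mem (by rw [Finset.mem_Icc]; omega), Int.card_Icc]
    omega
  have hdiv : ∀ x y : FF, x / (qF * y) = qF⁻¹ * (x / y) := by
    intro x y
    rw [mul_comm qF y, ← div_div, div_eq_mul_inv (x / y) qF]
    exact mul_comm _ _
  have hstep : ∏ b ∈ ((In n).erase a).erase (-a),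
      (qF * LF a - qF⁻¹ * LF b) / (qF * LF a - qF * LF b)
      = qF⁻¹ ^ (2 * n - 2) * Pna n a := by
    have hterm : ∀ b ∈ ((In n).erase a).erase (-a),
        (qF * LF a - qF⁻¹ * LF b) / (qF * LF a - qF * LF b)
        = qF⁻¹ * ((qF * LF a - qF⁻¹ * LF b) / (LF a - LF b)) := by
      intro b _
      rw [← mul_sub, hdiv]
    rw [Finset.prod_congr rfl hterm, Finset.prod_mul_distrib, Finset.prod_const, hcard, Pna]
  rw [hstep, LF_neg a]
  have hzc : qF ^ (2 * (n : ℤ) - 2) = qF ^ (2 * n - 2) := by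
    rw [show (2 * (n : ℤ) - 2) = ((2 * n - 2 : ℕ) : ℤ) by omega, zpow_natCast]
  rw [hzc]
  have hqm : qF ^ (2 * n - 2) * qF⁻¹ ^ (2 * n - 2) = 1 := by
    rw [← mul_pow, mul_inv_cancel₀ qF_ne, one_pow]
  have hAf := key qF (LF a) qF_ne hL h1 h2
  set Xl := ((qF ^ (2 - 2 * (n : ℤ)) * LF a - 1) / (qF - qF⁻¹)) ^ ℓ with hXl
  linear_combination (Xl * Pna n a * qF ^ (2 * n - 2) * qF⁻¹ ^ (2 * n - 2)) * hAf +
    (Xl * Pna n a) * hqm
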